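/- arXiv:2311.15381 — 7 statements merged into one kernel-verified Lean document; each statement's English description precedes it below -/
import Mathlib

section
/- Let G be a transition graph with n vertices. Then for every set S in F(G) there exists an (s,t)-path P in G with label set ℓ(P) = S whose length is at most (|S| + 1)·n. -/
structure TransitionGraph (V E U : Type*) where
  src : E → V
  tgt : E → V
  s : V
  t : V
  lab : E → Option U

namespace TransitionGraph

variable {V E U : Type*}

/-- An `(s,t)`-path: a finite sequence of edges forming a walk from `s` to `t`
(the empty path counts only when `s = t`). -/
def IsSTPath (G : TransitionGraph V E U) (P : List E) : Prop :=
  List.Chain' (fun e f => G.tgt e = G.src f) P ∧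
    ((P = [] ∧ G.s = G.t) ∨
      ∃ h : P ≠ [], G.src (P.head h) = G.s ∧ G.tgt (P.getLast h) = G.t)

/-- The label set of a path: the set of (non-`none`) labels of its edges. -/
def labelSet [DecidableEq U] (G : TransitionGraph V E U) (P : List E) : Finset U :=
  (P.filterMap G.lab).toFinset

/-- The family `F(G)` of all label sets of `(s,t)`-paths. -/
def labelFamily [DecidableEq U] (G : TransitionGraph V E U) : Set (Finset U) :=
  {S | ∃ P : List E, G.IsSTPath P ∧ G.labelSet P = S}

end TransitionGraph

/-! A walk whose length exceeds `(|ℓ(P)| + 1)·n` visits `N + 1 > (|ℓ(P)| + 1)·n` states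
(number of labels collected so far, current vertex), so two positions `i < j` share a state.
The labels collected between them already occur before `i`, so cutting out the closed walk
from `i` to `j` keeps both the endpoints and the label set; iterate until the bound holds. -/

namespace TransitionGraph

variable {V E U : Type*} {G : TransitionGraph V E U}

def IsWalk (G : TransitionGraph V E U) : V → V → List E → Prop
  | u, v, [] => u = v
  | u, v, e :: P => G.src e = u ∧ G.IsWalk (G.tgt e) v P

@[simp]
lemma isWalk_nil {u v : V} : G.IsWalk u v [] ↔ u = v := Iff.rfl

@[simp]
lemma isWalk_cons {u v : V} {e : E} {P : List E} :
    G.IsWalk u v (e :: P) ↔ G.src e = u ∧ G.IsWalk (G.tgt e) v P := Iff.rfl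

lemma isWalk_append {u w : V} {P Q : List E} :
    G.IsWalk u w (P ++ Q) ↔ ∃ v, G.IsWalk u v P ∧ G.IsWalk v w Q := by
  induction P generalizing u with
  | nil => simp
  | cons e P ih => simp [ih, and_assoc]

lemma isWalk_iff {u v : V} {P : List E} :
    G.IsWalk u v P ↔ List.IsChain (fun e f => G.tgt e = G.src f) P ∧
      ((P = [] ∧ u = v) ∨
        ∃ h : P ≠ [], G.src (P.head h) = u ∧ G.tgt (P.getLast h) = v) := by
  induction P generalizing u with
  | nil => simp
  | cons e P ih =>
    cases P with
    | nil => simp [eq_comm]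
    | cons f P =>
      simp only [isWalk_cons, ih, List.isChain_cons_cons]
      simp [and_assoc, eq_comm, and_left_comm]

lemma isSTPath_iff_isWalk {P : List E} : G.IsSTPath P ↔ G.IsWalk G.s G.t P :=
  isWalk_iff.symm

variable [DecidableEq U]

lemma labelSet_append (P Q : List E) : G.labelSet (P ++ Q) = G.labelSet P ∪ G.labelSet Q := by
  simp [labelSet, List.filterMap_append]

lemma labelSet_mono {P Q : List E} (h : P.Sublist Q) : G.labelSet P ⊆ G.labelSet Q := by
  intro x hx
  simp only [labelSet, List.mem_toFinset] at hx ⊢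
  exact (h.filterMap G.lab).subset hx

variable [Fintype V]

lemma IsWalk.exists_shorter {u v : V} {P : List E} (hP : G.IsWalk u v P)
    (hlen : ((G.labelSet P).card + 1) * Fintype.card V < P.length) :
    ∃ Q, G.IsWalk u v Q ∧ G.labelSet Q = G.labelSet P ∧ Q.length < P.length := by
  have hsplit (i : ℕ) : ∃ w, G.IsWalk u w (P.take i) ∧ G.IsWalk w v (P.drop i) :=
    isWalk_append.1 (by rwa [List.take_append_drop])
  choose w hw using hsplit
  obtain ⟨i, hi, j, hj, hne, hstate⟩ :=
    Finset.exists_ne_map_eq_of_card_lt_of_maps_to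
      (s := Finset.range (P.length + 1))
      (t := Finset.range ((G.labelSet P).card + 1) ×ˢ Finset.univ)
      (f := fun i => ((G.labelSet (P.take i)).card, w i))
      (by simp only [Finset.card_product, Finset.card_range, Finset.card_univ]; omega)
      (fun i _ => by
        simpa [Nat.lt_succ_iff] using Finset.card_le_card (labelSet_mono (List.take_sublist i P)))
  wlog hij : i < j generalizing i j
  · exact this j hj i hi hne.symm hstate.symm (by omega)
  simp only [Prod.mk.injEq] at hstate
  obtain ⟨hcard, hwij⟩ := hstate
  have hlab : G.labelSet (P.take i) = G.labelSet (P.take j) :=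
    Finset.eq_of_subset_of_card_le (labelSet_mono (List.take_prefix_take_left hij.le).sublist)
      hcard.ge
  refine ⟨P.take i ++ P.drop j, isWalk_append.2 ⟨w i, (hw i).1, hwij ▸ (hw j).2⟩, ?_, ?_⟩
  · rw [labelSet_append, hlab, ← labelSet_append, List.take_append_drop]
  · simp only [Finset.mem_range] at hj
    simp only [List.length_append, List.length_take, List.length_drop]
    omega

lemma IsWalk.exists_length_le {u v : V} {P : List E} (hP : G.IsWalk u v P) :
    ∃ Q, G.IsWalk u v Q ∧ G.labelSet Q = G.labelSet P ∧
      Q.length ≤ ((G.labelSet P).card + 1) * Fintype.card V := by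
  induction hn : P.length using Nat.strong_induction_on generalizing P with
  | _ n ih =>
    by_cases h : P.length ≤ ((G.labelSet P).card + 1) * Fintype.card V
    · exact ⟨P, hP, rfl, h⟩
    obtain ⟨Q, hQ, hlab, hlt⟩ := hP.exists_shorter (not_le.1 h)
    obtain ⟨R, hR, hlab', hlen⟩ := ih _ (hn ▸ hlt) hQ rfl
    exact ⟨R, hR, hlab'.trans hlab, hlab ▸ hlen⟩

end TransitionGraph

open TransitionGraph in
theorem stmt0_general {V E U : Type*} [Fintype V] [DecidableEq U]
    (G : TransitionGraph V E U) (S : Finset U) (hS : S ∈ G.labelFamily) :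
    ∃ P : List E, G.IsSTPath P ∧ G.labelSet P = S ∧
      P.length ≤ (S.card + 1) * Fintype.card V := by
  obtain ⟨P, hP, rfl⟩ := hS
  simpa only [isSTPath_iff_isWalk] using (isSTPath_iff_isWalk.1 hP).exists_length_le

theorem stmt0 {V E U : Type*} [Fintype V] [Fintype E] [Fintype U] [DecidableEq U]
    (G : TransitionGraph V E U) (S : Finset U) (hS : S ∈ G.labelFamily) :
    ∃ P : List E, G.IsSTPath P ∧ G.labelSet P = S ∧
      P.length ≤ (S.card + 1) * Fintype.card V :=
  stmt0_general G S hS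
end

section
/- Let M ≥ 1 be a natural number and r ≥ 1 a real number. Let C be an 𝔽₂-linear subspace of the space of functions Fin M → ZMod 2 such that every nonzero codeword of C has Hamming weight at least M/r. Then for any two distinct nonzero codewords c₁, c₂ ∈ C, their supports S₁ = supp(c₁) and S₂ = supp(c₂) (the sets of coordinates where the codeword is nonzero) satisfy |S₁ Δ S₂| > max(|S₁|, |S₂|)/(r+1); in particular, the family of supports of nonzero codewords of C has the 1/(r+1)-separability property. -/
/-- The support of a vector in `Fin M → ZMod 2`: the set of coordinates where it is nonzero. -/
def codeSupp {M : ℕ} (c : Fin M → ZMod 2) : Finset (Fin M) :=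
  Finset.univ.filter (fun i => c i ≠ 0)

/-- The `ε`-separability property for a family of finite sets. -/
def SepProperty {α : Type*} [DecidableEq α] (ε : ℝ) (F : Set (Finset α)) : Prop :=
  ∀ S₁ ∈ F, ∀ S₂ ∈ F, S₁ ≠ S₂ →
    (6 : ℝ) ≤ ε * (max S₁.card S₂.card : ℕ) →
    ε * (max S₁.card S₂.card : ℕ) < ((symmDiff S₁ S₂).card : ℝ)

lemma codeSupp_add {M : ℕ} (c d : Fin M → ZMod 2) :
    codeSupp (c + d) = symmDiff (codeSupp c) (codeSupp d) := by
  ext i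
  simp only [codeSupp, Finset.mem_symmDiff, Finset.mem_filter, Finset.mem_univ, true_and,
    Pi.add_apply]
  have : ∀ a b : ZMod 2, a + b ≠ 0 ↔ (a ≠ 0 ∧ ¬b ≠ 0 ∨ b ≠ 0 ∧ ¬a ≠ 0) := by decide
  exact this (c i) (d i)

theorem stmt3 (M : ℕ) (hM : 1 ≤ M) (r : ℝ) (hr : 1 ≤ r)
    (C : Submodule (ZMod 2) (Fin M → ZMod 2))
    (hdist : ∀ c ∈ C, c ≠ 0 → (M : ℝ) / r ≤ ((codeSupp c).card : ℝ)) :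
    (∀ c₁ ∈ C, ∀ c₂ ∈ C, c₁ ≠ 0 → c₂ ≠ 0 → c₁ ≠ c₂ →
      (max (codeSupp c₁).card (codeSupp c₂).card : ℕ) / (r + 1) <
        ((symmDiff (codeSupp c₁) (codeSupp c₂)).card : ℝ)) ∧
    SepProperty (1 / (r + 1)) {S | ∃ c ∈ C, c ≠ 0 ∧ codeSupp c = S} := by
  have hr0 : (0 : ℝ) < r := lt_of_lt_of_le one_pos hr
  have hM0 : (0 : ℝ) < M := by exact_mod_cast hM
  have main : ∀ c₁ ∈ C, ∀ c₂ ∈ C, c₁ ≠ 0 → c₂ ≠ 0 → c₁ ≠ c₂ →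
      (max (codeSupp c₁).card (codeSupp c₂).card : ℕ) / (r + 1) <
        ((symmDiff (codeSupp c₁) (codeSupp c₂)).card : ℝ) := by
    intro c₁ hc₁ c₂ hc₂ h₁ h₂ hne
    have hsum : c₁ + c₂ ∈ C := C.add_mem hc₁ hc₂
    have hsne : c₁ + c₂ ≠ 0 := by
      intro h
      apply hne
      funext i
      have hi : c₁ i + c₂ i = 0 := congrFun h i
      have := eq_neg_of_add_eq_zero_left hi
      rwa [CharTwo.neg_eq] at this
    have hlow : (M : ℝ) / r ≤ ((codeSupp (c₁ + c₂)).card : ℝ) := hdist _ hsum hsne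
    rw [codeSupp_add] at hlow
    refine lt_of_lt_of_le ?_ hlow
    have hmax : ((max (codeSupp c₁).card (codeSupp c₂).card : ℕ) : ℝ) ≤ (M : ℝ) := by
      have h1 : (codeSupp c₁).card ≤ M := by
        simpa using Finset.card_le_card (Finset.subset_univ (codeSupp c₁))
      have h2 : (codeSupp c₂).card ≤ M := by
        simpa using Finset.card_le_card (Finset.subset_univ (codeSupp c₂))
      exact_mod_cast max_le h1 h2
    calc ((max (codeSupp c₁).card (codeSupp c₂).card : ℕ) : ℝ) / (r + 1)
        ≤ (M : ℝ) / (r + 1) := by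
          apply div_le_div_of_nonneg_right hmax; linarith
      _ < (M : ℝ) / r := by
          apply div_lt_div_of_pos_left hM0 hr0; linarith
  refine ⟨main, ?_⟩
  rintro S₁ ⟨c₁, hc₁, h₁, rfl⟩ S₂ ⟨c₂, hc₂, h₂, rfl⟩ hSne _
  have hcne : c₁ ≠ c₂ := by rintro rfl; exact hSne rfl
  have := main c₁ hc₁ c₂ hc₂ h₁ h₂ hcne
  rw [one_div, inv_mul_eq_div]
  exact this
end

section
/- For w : Fin n → Bool and w' : Fin n' → Bool, if the simple graphs H_w and H_{w'} are isomorphic, then n = n' and w = w' (that is, w i = w' i for every index i, after identifying Fin n with Fin n'). -/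
/-- Vertices of the graph `H_w`: the path vertices `v₀, …, v_{n+1}`, five extra
clique vertices (forming a `K₆` with `v₀`), four extra clique vertices (forming a
`K₅` with `v_{n+1}`), and a pendant vertex for each `i` with `w i = true`. -/
def HVert (n : ℕ) (w : Fin n → Bool) : Type :=
  Fin (n + 2) ⊕ Fin 5 ⊕ Fin 4 ⊕ {i : Fin n // w i = true}

/-- The base relation generating the edges of `H_w`. -/
def Hrel (n : ℕ) (w : Fin n → Bool) : HVert n w → HVert n w → Prop
  | Sum.inl i, Sum.inl j => (i : ℕ) + 1 = (j : ℕ)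
  | Sum.inl i, Sum.inr (Sum.inl _) => (i : ℕ) = 0
  | Sum.inl i, Sum.inr (Sum.inr (Sum.inl _)) => (i : ℕ) = n + 1
  | Sum.inl i, Sum.inr (Sum.inr (Sum.inr j)) => (i : ℕ) = (j.1 : ℕ) + 1
  | Sum.inr (Sum.inl a), Sum.inr (Sum.inl b) => a ≠ b
  | Sum.inr (Sum.inr (Sum.inl a)), Sum.inr (Sum.inr (Sum.inl b)) => a ≠ b
  | _, _ => False

/-- The simple graph `H_w` encoding the binary word `w`. -/
def Hgraph (n : ℕ) (w : Fin n → Bool) : SimpleGraph (HVert n w) :=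
  SimpleGraph.fromRel (Hrel n w)

/-!
Isomorphisms preserve degrees and distances. The pendant vertices are exactly the vertices of
degree one, so comparing vertex counts gives `n = n'`. The vertex `v₀` is the only one of degree
at least six, so every isomorphism fixes it, and `w i` holds exactly when some vertex of degree one
lies at distance `i + 2` from `v₀`. The lower bound on that distance comes from a level function
that changes by at most one along each edge.
-/

namespace SimpleGraph

variable {V W : Type*} {G : SimpleGraph V} {G' : SimpleGraph W}

theorem Hom.edist_le (f : G →g G') (u v : V) : G'.edist (f u) (f v) ≤ G.edist u v := by
  by_cases h : G.Reachable u v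
  · obtain ⟨p, hp⟩ := h.exists_walk_length_eq_edist
    rw [← hp, ← p.length_map f]
    exact SimpleGraph.edist_le _
  · rw [edist_eq_top_of_not_reachable h]
    exact le_top

theorem Iso.edist_eq (e : G ≃g G') (u v : V) : G'.edist (e u) (e v) = G.edist u v :=
  le_antisymm (e.toHom.edist_le u v) <| by
    simpa using e.symm.toHom.edist_le (e u) (e v)

theorem Iso.dist_eq (e : G ≃g G') (u v : V) : G'.dist (e u) (e v) = G.dist u v := by
  rw [dist, dist, e.edist_eq]

theorem Iso.exists_degree_dist_iff (e : G ≃g G') [∀ x, Fintype (G.neighborSet x)]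
    [∀ x, Fintype (G'.neighborSet x)] (v : V) (d k : ℕ) :
    (∃ x, G'.degree x = d ∧ G'.dist (e v) x = k) ↔
      ∃ x, G.degree x = d ∧ G.dist v x = k := by
  simp only [e.surjective.exists, e.degree_eq, e.dist_eq]

theorem Walk.le_add_length_of_adj_le {f : V → ℕ} (hf : ∀ x y, G.Adj x y → f y ≤ f x + 1)
    {u v : V} (p : G.Walk u v) : f v ≤ f u + p.length := by
  induction p with
  | nil => simp
  | cons h _ ih => have := hf _ _ h; simp only [length_cons]; omega

theorem Reachable.le_add_dist_of_adj_le {f : V → ℕ}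
    (hf : ∀ x y, G.Adj x y → f y ≤ f x + 1)
    {u v : V} (h : G.Reachable u v) : f v ≤ f u + G.dist u v := by
  obtain ⟨p, hp⟩ := h.exists_walk_length_eq_dist
  exact hp ▸ p.le_add_length_of_adj_le hf

variable {x y z : V} [Fintype (G.neighborSet x)]

theorem card_le_degree_of_forall_adj {s : Finset V} (h : ∀ y ∈ s, G.Adj x y) :
    s.card ≤ G.degree x := by
  rw [← card_neighborFinset_eq_degree]
  exact Finset.card_le_card fun y hy => (mem_neighborFinset G x y).2 (h y hy)

theorem degree_le_card_of_forall_adj_mem {s : Finset V} (h : ∀ y, G.Adj x y → y ∈ s) :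
    G.degree x ≤ s.card := by
  rw [← card_neighborFinset_eq_degree]
  exact Finset.card_le_card fun y hy => h y ((mem_neighborFinset G x y).1 hy)

theorem degree_ne_one_of_adj_of_adj (hy : G.Adj x y) (hz : G.Adj x z) (hyz : y ≠ z) :
    G.degree x ≠ 1 := by
  rw [Ne, degree_eq_one_iff_existsUnique_adj]
  rintro ⟨u, -, hu⟩
  exact hyz ((hu y hy).trans (hu z hz).symm)

end SimpleGraph

namespace HVert

variable {n : ℕ} {w : Fin n → Bool}

abbrev path (i : Fin (n + 2)) : HVert n w := Sum.inl i
abbrev cliqueA (a : Fin 5) : HVert n w := Sum.inr (Sum.inl a)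
abbrev cliqueB (b : Fin 4) : HVert n w := Sum.inr (Sum.inr (Sum.inl b))
abbrev pendant (j : {i : Fin n // w i = true}) : HVert n w := Sum.inr (Sum.inr (Sum.inr j))

-- Case analysis on the underlying sum type would leave terms whose type is no longer `HVert n w`.
@[elab_as_elim]
def cases {motive : HVert n w → Sort*} (path : ∀ i, motive (path i))
    (cliqueA : ∀ a, motive (cliqueA a)) (cliqueB : ∀ b, motive (cliqueB b))
    (pendant : ∀ j, motive (pendant j)) : ∀ x, motive x
  | Sum.inl i => path i
  | Sum.inr (Sum.inl a) => cliqueA a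
  | Sum.inr (Sum.inr (Sum.inl b)) => cliqueB b
  | Sum.inr (Sum.inr (Sum.inr j)) => pendant j

@[simp]
theorem path_inj {i j : Fin (n + 2)} : path (w := w) i = path j ↔ i = j :=
  Sum.inl_injective.eq_iff

@[simp]
theorem cliqueA_inj {a a' : Fin 5} : cliqueA (n := n) (w := w) a = cliqueA a' ↔ a = a' :=
  (Sum.inr_injective.comp Sum.inl_injective).eq_iff

@[simp]
theorem cliqueB_inj {b b' : Fin 4} : cliqueB (n := n) (w := w) b = cliqueB b' ↔ b = b' :=
  (Sum.inr_injective.comp (Sum.inr_injective.comp Sum.inl_injective)).eq_iff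

theorem pendant_injective : Function.Injective (pendant (n := n) (w := w)) :=
  Sum.inr_injective.comp (Sum.inr_injective.comp Sum.inr_injective)

@[simp]
theorem pendant_inj {j j' : {i : Fin n // w i = true}} : pendant j = pendant j' ↔ j = j' :=
  pendant_injective.eq_iff

instance : Fintype (HVert n w) := by unfold HVert; infer_instance

instance : DecidableEq (HVert n w) := by unfold HVert; infer_instance

theorem card_eq : Nat.card (HVert n w) = n + 11 + Nat.card {i : Fin n // w i = true} := by
  unfold HVert
  simp only [Nat.card_eq_fintype_card, Fintype.card_sum, Fintype.card_fin]
  omega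

end HVert

namespace Hgraph

open HVert SimpleGraph Finset

variable {n : ℕ} {w : Fin n → Bool}

theorem ne_of_hrel {x y : HVert n w} (h : Hrel n w x y) : x ≠ y := by
  rintro rfl
  induction x using HVert.cases <;> simp [Hrel] at h

theorem adj_iff {x y : HVert n w} : (Hgraph n w).Adj x y ↔ Hrel n w x y ∨ Hrel n w y x := by
  rw [Hgraph, fromRel_adj, and_iff_right_iff_imp]
  rintro (h | h)
  exacts [ne_of_hrel h, (ne_of_hrel h).symm]

noncomputable instance : DecidableRel (Hgraph n w).Adj := Classical.decRel _

theorem exists_walk_path_zero (k : ℕ) (hk : k < n + 2) :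
    ∃ p : (Hgraph n w).Walk (path 0) (path ⟨k, hk⟩), p.length = k := by
  induction k with
  | zero => exact ⟨.nil, rfl⟩
  | succ k ih =>
    obtain ⟨p, hp⟩ := ih (by omega)
    have hadj : (Hgraph n w).Adj (path ⟨k, by omega⟩) (path ⟨k + 1, hk⟩) := by
      simp [adj_iff, Hrel]
    exact ⟨p.concat hadj, by simp [hp]⟩

/-- A lower bound for the distance from `v₀`. -/
def level : HVert n w → ℕ
  | Sum.inl i => i
  | Sum.inr (Sum.inl _) => 0
  | Sum.inr (Sum.inr (Sum.inl _)) => n + 1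
  | Sum.inr (Sum.inr (Sum.inr j)) => j.1 + 2

theorem level_le_of_adj {x y : HVert n w} (h : (Hgraph n w).Adj x y) : level y ≤ level x + 1 := by
  induction x using HVert.cases <;> induction y using HVert.cases <;>
    simp [adj_iff, Hrel, level, -Fin.val_eq_zero_iff] at h ⊢ <;> omega

theorem dist_path_zero_pendant (j : {i : Fin n // w i = true}) :
    (Hgraph n w).dist (path 0) (pendant j) = j.1 + 2 := by
  have hj : (j.1 : ℕ) + 1 < n + 2 := by omega
  obtain ⟨p, hp⟩ := exists_walk_path_zero (w := w) _ hj
  have hadj : (Hgraph n w).Adj (path ⟨j.1 + 1, hj⟩) (pendant j) := by simp [adj_iff, Hrel]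
  have hle := dist_le (p.concat hadj)
  have hge := Reachable.le_add_dist_of_adj_le (fun _ _ => level_le_of_adj) ⟨p.concat hadj⟩
  simp only [Walk.length_concat, hp, level, Fin.val_zero] at hle hge
  omega

theorem degree_eq_one_iff {x : HVert n w} :
    (Hgraph n w).degree x = 1 ↔ x ∈ Set.range pendant := by
  constructor
  · intro hx
    induction x using HVert.cases with
    | path i =>
      refine absurd hx ?_
      obtain h | h | h :
        (i : ℕ) = 0 ∨ (i : ℕ) = n + 1 ∨ (0 < (i : ℕ) ∧ (i : ℕ) < n + 1) := by omega
      · exact degree_ne_one_of_adj_of_adj (y := cliqueA 0) (z := path ⟨1, by omega⟩)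
          (by simp [adj_iff, Hrel, h]) (by simp [adj_iff, Hrel, h]) nofun
      · exact degree_ne_one_of_adj_of_adj (y := cliqueB 0) (z := path ⟨n, by omega⟩)
          (by simp [adj_iff, Hrel, h]) (by simp [adj_iff, Hrel, h]) nofun
      · exact degree_ne_one_of_adj_of_adj
          (y := path ⟨i - 1, by omega⟩) (z := path ⟨i + 1, by omega⟩)
          (by simp [adj_iff, Hrel]; omega) (by simp [adj_iff, Hrel]) (by simp [Fin.ext_iff])
    | cliqueA a =>
      exact absurd hx (degree_ne_one_of_adj_of_adj (y := path 0) (z := cliqueA (a + 1))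
        (by simp [adj_iff, Hrel]) (by simp [adj_iff, Hrel]) nofun)
    | cliqueB b =>
      exact absurd hx (degree_ne_one_of_adj_of_adj (y := path (Fin.last _)) (z := cliqueB (b + 1))
        (by simp [adj_iff, Hrel]) (by simp [adj_iff, Hrel]) nofun)
    | pendant j => exact ⟨j, rfl⟩
  · rintro ⟨j, rfl⟩
    rw [degree_eq_one_iff_existsUnique_adj]
    refine ⟨path ⟨j.1 + 1, by omega⟩, by simp [adj_iff, Hrel], fun y hy => ?_⟩
    induction y using HVert.cases <;> simp [adj_iff, Hrel] at hy ⊢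
    exact Fin.ext hy

theorem six_le_degree_path_zero : 6 ≤ (Hgraph n w).degree (path 0) := by
  calc 6 = #(insert (path 1) (univ.image (cliqueA (n := n) (w := w)))) := by
        rw [card_insert_of_notMem (by simp), card_image_of_injective _ fun _ _ => cliqueA_inj.1]
        simp
    _ ≤ _ := card_le_degree_of_forall_adj (by simp [adj_iff, Hrel])

theorem degree_cliqueA_le (a : Fin 5) : (Hgraph n w).degree (cliqueA a) ≤ 5 :=
  calc _ ≤ #(insert (path 0) ((univ.erase a).image cliqueA)) :=
        degree_le_card_of_forall_adj_mem fun y hy => by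
          induction y using HVert.cases <;> simp_all [adj_iff, Hrel, eq_comm]
    _ ≤ #(univ.erase a) + 1 := (card_insert_le _ _).trans (by gcongr; exact card_image_le)
    _ = 5 := by simp

theorem degree_cliqueB_le (b : Fin 4) : (Hgraph n w).degree (cliqueB b) ≤ 5 :=
  calc _ ≤ #(insert (path (Fin.last _)) ((univ.erase b).image cliqueB)) :=
        degree_le_card_of_forall_adj_mem fun y hy => by
          induction y using HVert.cases <;> simp_all [adj_iff, Hrel, eq_comm]
          exact Fin.ext hy
    _ ≤ #(univ.erase b) + 1 := (card_insert_le _ _).trans (by gcongr; exact card_image_le)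
    _ ≤ 5 := by simp

theorem degree_path_last_le : (Hgraph n w).degree (path (Fin.last _)) ≤ 5 :=
  calc _ ≤ #(insert (path (Fin.last n).castSucc) (univ.image (cliqueB (n := n) (w := w)))) :=
        degree_le_card_of_forall_adj_mem fun y hy => by
          induction y using HVert.cases <;> simp_all [adj_iff, Hrel, Fin.ext_iff] <;> omega
    _ ≤ #(univ : Finset (Fin 4)) + 1 :=
        (card_insert_le _ _).trans (by gcongr; exact card_image_le)
    _ = 5 := by simp

theorem eq_path_or_pendant_of_adj_path {i : Fin (n + 2)} (h0 : 0 < (i : ℕ))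
    (hlast : (i : ℕ) < n + 1)
    {y : HVert n w} (hy : (Hgraph n w).Adj (path i) y) :
    y = path ⟨i - 1, by omega⟩ ∨ y = path ⟨i + 1, by omega⟩ ∨
      ∃ j : {i : Fin n // w i = true}, (j.1 : ℕ) + 1 = i ∧ y = pendant j := by
  induction y using HVert.cases with
  | path k => simp [adj_iff, Hrel, Fin.ext_iff] at hy ⊢; omega
  | cliqueA a => simp [adj_iff, Hrel, -Fin.val_eq_zero_iff] at hy; omega
  | cliqueB b => simp [adj_iff, Hrel] at hy; omega
  | pendant j =>
    simp only [adj_iff, Hrel, or_false] at hy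
    exact .inr (.inr ⟨j, hy.symm, rfl⟩)

theorem degree_path_le_three {i : Fin (n + 2)} (h0 : 0 < (i : ℕ)) (hlast : (i : ℕ) < n + 1) :
    (Hgraph n w).degree (path i) ≤ 3 := by
  by_cases hp : ∃ j : {i : Fin n // w i = true}, (j.1 : ℕ) + 1 = i
  · obtain ⟨j, hj⟩ := hp
    refine (degree_le_card_of_forall_adj_mem
      (s := {path ⟨i - 1, by omega⟩, path ⟨i + 1, by omega⟩, pendant j})
      fun y hy => ?_).trans card_le_three
    rcases eq_path_or_pendant_of_adj_path h0 hlast hy with rfl | rfl | ⟨j', hj', rfl⟩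
    · simp
    · simp
    · simp [Subtype.ext_iff, Fin.ext_iff]; omega
  · refine (degree_le_card_of_forall_adj_mem
      (s := {path ⟨i - 1, by omega⟩, path ⟨i + 1, by omega⟩})
      fun y hy => ?_).trans (card_le_two.trans (by norm_num))
    rcases eq_path_or_pendant_of_adj_path h0 hlast hy with rfl | rfl | ⟨j', hj', rfl⟩
    · simp
    · simp
    · exact absurd ⟨j', hj'⟩ hp

theorem six_le_degree_iff {x : HVert n w} : 6 ≤ (Hgraph n w).degree x ↔ x = path 0 := by
  refine ⟨fun hx => ?_, fun hx => hx ▸ six_le_degree_path_zero⟩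
  induction x using HVert.cases with
  | path i =>
    obtain h | h | h :
        (i : ℕ) = 0 ∨ (i : ℕ) = n + 1 ∨ (0 < (i : ℕ) ∧ (i : ℕ) < n + 1) := by omega
    · simp [Fin.ext_iff, h]
    · rw [show i = Fin.last _ from Fin.ext h] at hx
      exact absurd hx (by have := degree_path_last_le (w := w); omega)
    · exact absurd hx (by have := degree_path_le_three (w := w) h.1 h.2; omega)
  | cliqueA a => exact absurd hx (by have := degree_cliqueA_le (w := w) a; omega)
  | cliqueB b => exact absurd hx (by have := degree_cliqueB_le (w := w) b; omega)
  | pendant j => exact absurd hx (by rw [degree_eq_one_iff.2 ⟨j, rfl⟩]; omega)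

theorem card_degree_eq_one :
    Nat.card {x // (Hgraph n w).degree x = 1} = Nat.card {i : Fin n // w i = true} :=
  Nat.card_congr <| (Equiv.subtypeEquivRight fun _ => degree_eq_one_iff).trans
    (Equiv.ofInjective _ pendant_injective).symm

theorem apply_eq_true_iff (i : Fin n) :
    w i = true ↔ ∃ x, (Hgraph n w).degree x = 1 ∧ (Hgraph n w).dist (path 0) x = i + 2 := by
  constructor
  · intro hi
    exact ⟨pendant ⟨i, hi⟩, degree_eq_one_iff.2 ⟨_, rfl⟩, dist_path_zero_pendant _⟩
  · rintro ⟨x, hx, hd⟩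
    obtain ⟨j, rfl⟩ := degree_eq_one_iff.1 hx
    rw [dist_path_zero_pendant, add_left_inj, Fin.val_inj] at hd
    exact hd ▸ j.2

end Hgraph

open HVert Hgraph

theorem stmt5 {n n' : ℕ} (w : Fin n → Bool) (w' : Fin n' → Bool)
    (h : Nonempty (Hgraph n w ≃g Hgraph n' w')) :
    ∃ hn : n = n', ∀ i : Fin n, w i = w' (Fin.cast hn i) := by
  obtain ⟨e⟩ := h
  have hn : n = n' := by
    have hV := Nat.card_congr e.toEquiv
    have hP : Nat.card {x // (Hgraph n w).degree x = 1} =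
        Nat.card {x // (Hgraph n' w').degree x = 1} :=
      Nat.card_congr (e.toEquiv.subtypeEquiv fun x => by rw [← e.degree_eq x]; rfl)
    rw [card_eq, card_eq] at hV
    rw [card_degree_eq_one, card_degree_eq_one] at hP
    omega
  subst hn
  have he0 : e (path 0) = path 0 := six_le_degree_iff.1 (e.degree_eq _ ▸ six_le_degree_path_zero)
  refine ⟨rfl, fun i => Bool.eq_iff_iff.2 ?_⟩
  rw [Fin.cast_eq_self, apply_eq_true_iff, apply_eq_true_iff, ← he0, e.exists_degree_dist_iff]
end

section
/- Let A be a trimmed NFA over an alphabet α with a finite state set. Then the family {content(w) : w is a word accepted by A} is finite if and only if for every pair of states q₁, q₂ the set L_{q₁q₂} = {x ∈ α : q₂ ∈ step(q₁, x)} is finite. -/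
/-- An NFA is trimmed if every state lies on an accepting run. -/
def Trimmed {α σ : Type*} (M : NFA α σ) : Prop :=
  ∀ q : σ, ∃ u v : List α,
    q ∈ M.evalFrom M.start u ∧ (M.evalFrom {q} v ∩ M.accept).Nonempty

lemma evalFrom_mono {α σ : Type*} (M : NFA α σ) {S T : Set σ} (h : S ⊆ T) (w : List α) :
    M.evalFrom S w ⊆ M.evalFrom T w := by
  induction w generalizing S T with
  | nil => simpa using h
  | cons a w ih =>
    simp only [NFA.evalFrom, List.foldl_cons] at *
    apply ih
    intro q hq
    rw [NFA.mem_stepSet] at *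
    obtain ⟨s, hs, hs'⟩ := hq
    exact ⟨s, h hs, hs'⟩

lemma evalFrom_append {α σ : Type*} (M : NFA α σ) (S : Set σ) (u v : List α) :
    M.evalFrom S (u ++ v) = M.evalFrom (M.evalFrom S u) v := by
  simp [NFA.evalFrom, List.foldl_append]

lemma evalFrom_empty {α σ : Type*} (M : NFA α σ) (w : List α) :
    M.evalFrom (∅ : Set σ) w = ∅ := by
  induction w with
  | nil => simp [NFA.evalFrom]
  | cons b w ihw =>
    simp only [NFA.evalFrom, List.foldl_cons] at *
    rw [show M.stepSet ∅ b = ∅ by simp [NFA.stepSet]]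
    exact ihw

lemma letter_step {α σ : Type*} (M : NFA α σ) (S : Set σ) (w : List α) (x : α)
    (hx : x ∈ w) (hne : (M.evalFrom S w).Nonempty) :
    ∃ q₁ q₂ : σ, q₂ ∈ M.step q₁ x := by
  induction w generalizing S with
  | nil => simp at hx
  | cons a w ih =>
    simp only [NFA.evalFrom, List.foldl_cons] at hne
    rcases List.mem_cons.mp hx with rfl | hx'
    · have h2 : (M.stepSet S x).Nonempty := by
        by_contra h
        rw [Set.not_nonempty_iff_eq_empty] at h
        rw [h] at hne
        have hemp : List.foldl M.stepSet (∅ : Set σ) w = ∅ := evalFrom_empty M w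
        rw [hemp] at hne
        exact Set.not_nonempty_empty hne
      obtain ⟨q, hq⟩ := h2
      rw [NFA.mem_stepSet] at hq
      exact ⟨hq.choose, q, hq.choose_spec.2⟩
    · exact ih _ hx' hne

theorem stmt6 {α σ : Type*} [DecidableEq α] [Fintype σ]
    (M : NFA α σ) (hT : Trimmed M) :
    {S : Finset α | ∃ w ∈ M.accepts, w.toFinset = S}.Finite ↔
      ∀ q₁ q₂ : σ, {x : α | q₂ ∈ M.step q₁ x}.Finite := by
  constructor
  · intro hF q₁ q₂
    obtain ⟨u, v, hu, hv⟩ := hT q₁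
    obtain ⟨u₂, v₂, hu₂, hv₂⟩ := hT q₂
    have key : ∀ x ∈ {x : α | q₂ ∈ M.step q₁ x},
        ∃ S ∈ {S : Finset α | ∃ w ∈ M.accepts, w.toFinset = S}, x ∈ S := by
      intro x hx
      refine ⟨(u ++ x :: v₂).toFinset, ⟨u ++ x :: v₂, ?_, rfl⟩, by simp⟩
      obtain ⟨qf, hqf1, hqf2⟩ := hv₂
      rw [NFA.mem_accepts]
      refine ⟨qf, hqf2, ?_⟩
      rw [evalFrom_append]
      have h1 : q₂ ∈ M.evalFrom (M.evalFrom M.start u) [x] := by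
        rw [NFA.evalFrom_singleton, NFA.mem_stepSet]
        exact ⟨q₁, hu, hx⟩
      have hmono : M.evalFrom {q₂} v₂ ⊆ M.evalFrom (M.evalFrom (M.evalFrom M.start u) [x]) v₂ :=
        evalFrom_mono M (by simpa using h1) v₂
      have h2 := hmono hqf1
      simpa [NFA.evalFrom, NFA.stepSet] using h2
    have hsub : {x : α | q₂ ∈ M.step q₁ x} ⊆
        ⋃ S ∈ {S : Finset α | ∃ w ∈ M.accepts, w.toFinset = S}, (S : Set α) := by
      intro x hx
      obtain ⟨S, hS, hxS⟩ := key x hx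
      exact Set.mem_biUnion hS hxS
    exact Set.Finite.subset (Set.Finite.biUnion hF (fun S _ => S.finite_toSet)) hsub
  · intro h
    have hX : {x : α | ∃ q₁ q₂ : σ, q₂ ∈ M.step q₁ x}.Finite := by
      have heq : {x : α | ∃ q₁ q₂ : σ, q₂ ∈ M.step q₁ x} =
          ⋃ q₁ : σ, ⋃ q₂ : σ, {x | q₂ ∈ M.step q₁ x} := by
        ext x; simp
      rw [heq]
      exact Set.finite_iUnion fun q₁ => Set.finite_iUnion fun q₂ => h q₁ q₂
    obtain ⟨X, hXeq⟩ := hX.exists_finset_coe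
    apply Set.Finite.subset X.powerset.finite_toSet
    rintro S ⟨w, hw, rfl⟩
    simp only [Finset.coe_powerset, Set.mem_preimage, Set.mem_powerset_iff]
    intro x hx
    simp only [Finset.mem_coe, List.mem_toFinset] at hx
    rw [NFA.mem_accepts] at hw
    obtain ⟨qf, _, hqf⟩ := hw
    rw [hXeq]
    exact letter_step M M.start w x hx ⟨qf, hqf⟩
end

section
/- Let A be an NFA over the finite alphabet U = {u₁, …, u_p} with state set Q, and let A^c be the counting automaton built from A: its state set is Q × {0, 1, …, p}, its start states are start(A) × {0}, its accepting states are accept(A) × {p}, and (q′, k) ∈ step^c((q, i), u_j) if and only if q′ ∈ step(q, u_j) and either (j ≤ i and k = i) or (j = i + 1 and k = i + 1). Then a word w over U is accepted by A^c if and only if: w is accepted by A, every symbol u₁, …, u_p occurs in w, and for every j, every symbol occurring in w strictly before the first occurrence of u_j belongs to {u₁, …, u_{j−1}}. -/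
/-- The counting automaton built from an NFA over the ordered alphabet `Fin p`
(the letter `j : Fin p` represents the symbol `u_{j+1}`). Its states are pairs of a
state of `M` and a counter in `{0, …, p}`; it counts the number of distinct symbols
seen so far and rejects words violating the order. -/
def countNFA {σ : Type*} {p : ℕ} (M : NFA (Fin p) σ) : NFA (Fin p) (σ × Fin (p + 1)) where
  step := fun qi j =>
    {q' | q'.1 ∈ M.step qi.1 j ∧
      (((j : ℕ) + 1 ≤ (qi.2 : ℕ) ∧ q'.2 = qi.2) ∨
        ((j : ℕ) + 1 = (qi.2 : ℕ) + 1 ∧ (q'.2 : ℕ) = (qi.2 : ℕ) + 1))}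
  start := {qi | qi.1 ∈ M.start ∧ qi.2 = 0}
  accept := {qi | qi.1 ∈ M.accept ∧ (qi.2 : ℕ) = p}

/-!
The counter component of `countNFA M` evolves deterministically and independently of `M`:
from counter `i`, a letter `j < i` keeps it, `j = i` increments it and `j > i` kills the run
(`counterStep`, with `none` for the dead run). So `countNFA M` is the product of `M` with this
partial automaton, and accepts `w` iff `M` does and the counter run from `0` ends at `p`. By
induction on the word, the counter run from `i` ends at `p` exactly when every letter `j ≥ i`
occurs in it and only letters below `j` precede its first occurrence.
-/

def counterStep {p : ℕ} (c : Option ℕ) (j : Fin p) : Option ℕ :=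
  c.bind fun i => if (j : ℕ) < i then some i else if (j : ℕ) = i then some (i + 1) else none

theorem foldl_counterStep_none {p : ℕ} (w : List (Fin p)) : w.foldl counterStep none = none := by
  induction w with
  | nil => rfl
  | cons j w ih => exact ih

section

variable {σ : Type*} {p : ℕ} (M : NFA (Fin p) σ)

theorem countNFA_stepSet (S : Set σ) (c : Option ℕ) (j : Fin p) :
    (countNFA M).stepSet {qi | qi.1 ∈ S ∧ c = some (qi.2 : ℕ)} j =
      {qi | qi.1 ∈ M.stepSet S j ∧ counterStep c j = some (qi.2 : ℕ)} := by
  ext ⟨q', k⟩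
  cases c with
  | none => simp [NFA.mem_stepSet, counterStep]
  | some i =>
    simp only [NFA.mem_stepSet, countNFA, counterStep, Set.mem_ofPred_eq, Option.some.injEq,
      Option.bind_some, Prod.exists]
    constructor
    · rintro ⟨q, k₀, ⟨hq, rfl⟩, hstep, ⟨hj, rfl⟩ | ⟨hj, hk⟩⟩
      · exact ⟨⟨q, hq, hstep⟩, by rw [if_pos (by omega)]⟩
      · exact ⟨⟨q, hq, hstep⟩, by rw [if_neg (by omega), if_pos (by omega), hk]⟩
    · rintro ⟨⟨q, hq, hstep⟩, hk⟩
      have hj := j.isLt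
      have hk' := k.isLt
      split_ifs at hk with h₁ h₂ <;> simp only [Option.some.injEq] at hk
      · exact ⟨q, k, ⟨hq, hk⟩, hstep, Or.inl ⟨by omega, rfl⟩⟩
      · exact ⟨q, ⟨i, by omega⟩, ⟨hq, rfl⟩, hstep, Or.inr ⟨by simp only; omega, hk.symm⟩⟩

theorem countNFA_evalFrom (S : Set σ) (c : Option ℕ) (w : List (Fin p)) :
    (countNFA M).evalFrom {qi | qi.1 ∈ S ∧ c = some (qi.2 : ℕ)} w =
      {qi | qi.1 ∈ M.evalFrom S w ∧ w.foldl counterStep c = some (qi.2 : ℕ)} := by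
  induction w generalizing S c with
  | nil => rfl
  | cons j w ih => rw [NFA.evalFrom_cons, countNFA_stepSet, ih]; rfl

theorem mem_countNFA_accepts (w : List (Fin p)) :
    w ∈ (countNFA M).accepts ↔ w ∈ M.accepts ∧ w.foldl counterStep (some 0) = some p := by
  have hstart : (countNFA M).start = {qi | qi.1 ∈ M.start ∧ some 0 = some (qi.2 : ℕ)} := by
    refine Set.ext fun qi => and_congr_right fun _ => ?_
    rw [Option.some.injEq, eq_comm, Fin.ext_iff]
    rfl
  simp only [NFA.mem_accepts, hstart, countNFA_evalFrom]
  constructor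
  · rintro ⟨⟨q, k⟩, ⟨hq, hk⟩, hqw, hrun⟩
    exact ⟨⟨q, hq, hqw⟩, hrun.trans (congrArg some hk)⟩
  · rintro ⟨⟨q, hq, hqw⟩, hrun⟩
    exact ⟨(q, Fin.last p), ⟨hq, rfl⟩, hqw, hrun⟩

end

def CoversInOrderFrom {p : ℕ} (i : ℕ) (w : List (Fin p)) : Prop :=
  ∀ j : Fin p, i ≤ (j : ℕ) → j ∈ w ∧ ∀ x ∈ w.take (w.idxOf j), x < j

theorem List.take_idxOf_cons_of_ne {α : Type*} [DecidableEq α] {x j : α} (w : List α)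
    (h : x ≠ j) : (x :: w).take ((x :: w).idxOf j) = x :: w.take (w.idxOf j) := by
  rw [List.idxOf_cons_ne w h, List.take_succ_cons]

section

variable {p : ℕ} {i : ℕ} {x : Fin p} {w : List (Fin p)}

theorem coversInOrderFrom_nil (hi : i ≤ p) : CoversInOrderFrom i ([] : List (Fin p)) ↔ i = p := by
  refine ⟨fun h => ?_, fun h j hj => absurd j.isLt (by omega)⟩
  by_contra hne
  exact List.not_mem_nil (h ⟨i, by omega⟩ le_rfl).1

theorem coversInOrderFrom_cons_of_val_lt (h : (x : ℕ) < i) :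
    CoversInOrderFrom i (x :: w) ↔ CoversInOrderFrom i w := by
  refine forall_congr' fun j => imp_congr_right fun hj => ?_
  have hne : x ≠ j := by rintro rfl; omega
  rw [List.take_idxOf_cons_of_ne w hne, List.mem_cons, List.forall_mem_cons]
  simp only [hne.symm, false_or, Fin.lt_def.2 (show (x : ℕ) < j by omega), true_and]

theorem coversInOrderFrom_cons_of_val_eq (h : (x : ℕ) = i) :
    CoversInOrderFrom i (x :: w) ↔ CoversInOrderFrom (i + 1) w := by
  constructor
  · intro hw j hj
    have hne : x ≠ j := by rintro rfl; omega
    obtain ⟨hjw, hbefore⟩ := hw j (by omega)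
    rw [List.take_idxOf_cons_of_ne w hne, List.forall_mem_cons] at hbefore
    exact ⟨(List.mem_cons.1 hjw).resolve_left hne.symm, hbefore.2⟩
  · intro hw j hj
    rcases eq_or_ne x j with rfl | hne
    · simp
    have hj' : i + 1 ≤ (j : ℕ) := by
      have : (x : ℕ) ≠ j := Fin.val_ne_of_ne hne
      omega
    obtain ⟨hjw, hbefore⟩ := hw j hj'
    rw [List.take_idxOf_cons_of_ne w hne, List.forall_mem_cons]
    exact ⟨List.mem_cons_of_mem x hjw, Fin.lt_def.2 (by omega), hbefore⟩

theorem not_coversInOrderFrom_cons_of_lt_val (h : i < (x : ℕ)) :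
    ¬ CoversInOrderFrom i (x :: w) := by
  intro hw
  have hip : i < p := h.trans x.isLt
  have hne : x ≠ ⟨i, hip⟩ := by rintro rfl; simp at h
  have := (hw ⟨i, hip⟩ le_rfl).2 x
  rw [List.take_idxOf_cons_of_ne w hne] at this
  exact absurd (Fin.lt_def.1 (this List.mem_cons_self)) (by simp only; omega)

theorem foldl_counterStep_eq_some_iff (w : List (Fin p)) (hi : i ≤ p) :
    w.foldl counterStep (some i) = some p ↔ CoversInOrderFrom i w := by
  induction w generalizing i with
  | nil => rw [List.foldl_nil, Option.some.injEq, coversInOrderFrom_nil hi]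
  | cons x w ih =>
    rw [List.foldl_cons]
    rcases lt_trichotomy (x : ℕ) i with hlt | heq | hgt
    · rw [coversInOrderFrom_cons_of_val_lt hlt, ← ih hi]
      simp [counterStep, hlt]
    · have hi' : i + 1 ≤ p := by have := x.isLt; omega
      rw [coversInOrderFrom_cons_of_val_eq heq, ← ih hi']
      simp [counterStep, heq]
    · rw [iff_false_intro (not_coversInOrderFrom_cons_of_lt_val hgt), iff_false]
      simp [counterStep, not_lt.2 hgt.le, hgt.ne', foldl_counterStep_none]

end

theorem stmt9 {σ : Type*} {p : ℕ} (M : NFA (Fin p) σ) (w : List (Fin p)) :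
    w ∈ (countNFA M).accepts ↔
      (w ∈ M.accepts ∧ (∀ j : Fin p, j ∈ w) ∧
        ∀ j : Fin p, ∀ x ∈ w.take (w.idxOf j), x < j) := by
  rw [mem_countNFA_accepts, foldl_counterStep_eq_some_iff w (Nat.zero_le p), CoversInOrderFrom]
  simp only [Nat.zero_le, true_implies, forall_and]
end

section
/- Let A be a trimmed NFA over the alphabet ℕ. Suppose there exist states q₁, q₂ such that the set {x ∈ ℕ : q₂ ∈ step(q₁, x)} is infinite and q₁ is reachable from q₂ (there exists a word v with q₁ ∈ evalFrom({q₂}, v)), i.e., the transition from q₁ to q₂ lies on a cycle. Then there exists N ∈ ℕ such that for every t ∈ ℕ there is a word w accepted by A whose content has cardinality exactly N + t. -/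
/-!
Choose a run `u` from a start state to `q₁` and a word `z` leading from `q₁` to an accepting
state. For any letters `x₁, …, xₖ` labelling edges `q₁ → q₂`, the word `x₁ v x₂ v ⋯ xₖ v` loops
from `q₁` back to `q₁`, so `u x₁ v ⋯ xₖ v z` is accepted. Since infinitely many letters label
that edge, we may take `t + 1` of them outside the content of `u v z`; taking at least one makes `v`
occur, so the accepted word has content of size `|content(u v z)| + 1 + t`.
-/

namespace NFA

variable {α σ : Type*} (M : NFA α σ)

theorem mem_evalFrom_append_of_mem {S : Set σ} {q r : σ} {x y : List α}
    (hx : q ∈ M.evalFrom S x) (hy : r ∈ M.evalFrom {q} y) :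
    r ∈ M.evalFrom S (x ++ y) := by
  rw [evalFrom_append, mem_evalFrom_iff_exists]
  exact ⟨q, hx, hy⟩

theorem mem_evalFrom_flatMap_cons {p q : σ} {v : List α} (hv : p ∈ M.evalFrom {q} v)
    {L : List α} (hL : ∀ x ∈ L, q ∈ M.step p x) :
    p ∈ M.evalFrom {p} (L.flatMap (· :: v)) := by
  induction L with
  | nil => exact Set.mem_singleton p
  | cons x xs ih =>
    have hxv : p ∈ M.evalFrom {p} (x :: v) := by
      rw [evalFrom_cons, stepSet_singleton, mem_evalFrom_iff_exists]
      exact ⟨q, hL x List.mem_cons_self, hv⟩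
    exact M.mem_evalFrom_append_of_mem hxv (ih fun y hy => hL y (List.mem_cons_of_mem x hy))

end NFA

theorem List.toFinset_flatMap_cons {α : Type*} [DecidableEq α] (v : List α) {L : List α}
    (hL : L ≠ []) : (L.flatMap (· :: v)).toFinset = L.toFinset ∪ v.toFinset := by
  obtain ⟨y, hy⟩ := List.exists_mem_of_ne_nil L hL
  ext a
  simp only [List.mem_toFinset, List.mem_flatMap, List.mem_cons, Finset.mem_union]
  grind

theorem stmt10 {σ : Type*} (M : NFA ℕ σ) (hT : Trimmed M)
    (q₁ q₂ : σ) (hinf : {x : ℕ | q₂ ∈ M.step q₁ x}.Infinite)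
    (v : List ℕ) (hv : q₁ ∈ M.evalFrom {q₂} v) :
    ∃ N : ℕ, ∀ t : ℕ, ∃ w ∈ M.accepts, w.toFinset.card = N + t := by
  obtain ⟨u, z, hu, qf, hqf, hacc⟩ := hT q₁
  set S := (u ++ v ++ z).toFinset
  refine ⟨S.card + 1, fun t => ?_⟩
  obtain ⟨T, hTfresh, hTcard⟩ := (hinf.sdiff S.finite_toSet).exists_subset_card_eq (t + 1)
  have hloop : q₁ ∈ M.evalFrom {q₁} (T.toList.flatMap (· :: v)) :=
    M.mem_evalFrom_flatMap_cons hv fun x hx => (hTfresh (Finset.mem_toList.mp hx)).1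
  have hT_ne : T.toList ≠ [] := by
    rw [Ne, Finset.toList_eq_nil, ← Finset.card_eq_zero]
    omega
  refine ⟨u ++ T.toList.flatMap (· :: v) ++ z, ?_, ?_⟩
  · rw [NFA.mem_accepts]
    exact ⟨qf, hacc, M.mem_evalFrom_append_of_mem (M.mem_evalFrom_append_of_mem hu hloop) hqf⟩
  · have hcontent : (u ++ T.toList.flatMap (· :: v) ++ z).toFinset = S ∪ T := by
      simp only [List.toFinset_append, List.toFinset_flatMap_cons v hT_ne,
        Finset.toList_toFinset, S]
      ac_rfl
    have hdisj : Disjoint S T :=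
      Finset.disjoint_right.mpr fun a ha => (hTfresh ha).2
    rw [hcontent, Finset.card_union_of_disjoint hdisj, hTcard, add_assoc, add_comm 1 t]
end

section
/- Let Γ be a four-letter alphabet with distinct symbols a, ◁, ▷, #, let k ≥ 1, and let A be an NFA over Γ with a finite state set. For states q₁, q₂, let L_{q₁q₂} ⊆ ℕ^k be the set of tuples (i₁, …, i_k) such that q₂ ∈ evalFrom({q₁}, ◁ a^{i₁} # a^{i₂} # ⋯ # a^{i_k} ▷). Then L_{q₁q₂} is a finite union of sets of the form S₁ × ⋯ × S_k, where each S_j ⊆ ℕ is eventually periodic: there exist N ∈ ℕ and p > 0 such that for all i ≥ N, i ∈ S_j if and only if i + p ∈ S_j. -/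
/-- The word `◁ a^{i₁} # a^{i₂} # ⋯ # a^{i_k} ▷` encoding the tuple `x : Fin k → ℕ`.
Here `lt`, `rt`, `sh` stand for the symbols `◁`, `▷`, `#`. -/
def blockWord {Γ : Type*} (a lt rt sh : Γ) {k : ℕ} (x : Fin k → ℕ) : List Γ :=
  [lt] ++ List.intercalate [sh] (List.ofFn fun j => List.replicate (x j) a) ++ [rt]

/-- A set `S ⊆ ℕ` is eventually periodic. -/
def EventuallyPeriodic (S : Set ℕ) : Prop :=
  ∃ (N p : ℕ), 0 < p ∧ ∀ i ≥ N, (i ∈ S ↔ i + p ∈ S)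

/-! Each block `a^i` is read by iterating the subset-construction step `S ↦ M.stepSet S a`, a map
on the finite set `Set σ`, so the reachable states depend eventually periodically on `i`. Reading
the whole word amounts to guessing, for each block, the state in which it is entered and the state
in which it is left; for a fixed such guess the admissible tuples form a product of eventually
periodic sets, and there are finitely many guesses. -/

theorem exists_fin_indexed_union_pi {ι κ α : Type*} [Finite κ] {P : Set α → Prop}
    (g : κ → ι → Set α) (hg : ∀ c j, P (g c j)) :
    ∃ (t : ℕ) (f : Fin t → ι → Set α), (∀ s j, P (f s j)) ∧
      {x : ι → α | ∃ c, ∀ j, x j ∈ g c j} = {x | ∃ s, ∀ j, x j ∈ f s j} := by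
  obtain ⟨t, ⟨e⟩⟩ := Finite.exists_equiv_fin κ
  refine ⟨t, g ∘ e.symm, fun s => hg (e.symm s), ?_⟩
  ext x
  exact e.exists_congr_left

theorem eventuallyPeriodic_setOf_iterate {α : Type*} [Finite α] (f : α → α) (x : α)
    (P : α → Prop) : EventuallyPeriodic {i | P (f^[i] x)} := by
  obtain ⟨m, n, hne, heq⟩ := Finite.exists_ne_map_eq_of_infinite fun i => f^[i] x
  wlog hmn : m < n generalizing m n
  · exact this n m hne.symm heq.symm (by omega)
  refine ⟨m, n - m, by omega, fun i hi => ?_⟩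
  obtain ⟨d, rfl⟩ := Nat.exists_eq_add_of_le hi
  have hper : f^[m + d + (n - m)] x = f^[m + d] x := by
    rw [show m + d + (n - m) = d + n by omega, add_comm m d, Function.iterate_add_apply,
      Function.iterate_add_apply, heq]
  simp only [Set.mem_ofPred_eq, hper]

namespace NFA

variable {Γ σ : Type*} (M : NFA Γ σ)

theorem mem_evalFrom_append_iff {p q : σ} {u w : List Γ} :
    q ∈ M.evalFrom {p} (u ++ w) ↔ ∃ r ∈ M.evalFrom {p} u, q ∈ M.evalFrom {r} w := by
  rw [evalFrom_append, mem_evalFrom_iff_exists]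

theorem evalFrom_replicate (S : Set σ) (b : Γ) (i : ℕ) :
    M.evalFrom S (List.replicate i b) = (M.stepSet · b)^[i] S := by
  induction i generalizing S with
  | zero => rfl
  | succ i ih => exact ih _

theorem eventuallyPeriodic_setOf_mem_evalFrom_replicate [Finite σ] (b : Γ) (p q : σ) :
    EventuallyPeriodic {i | q ∈ M.evalFrom {p} (List.replicate i b)} := by
  simp only [evalFrom_replicate]
  exact eventuallyPeriodic_setOf_iterate _ _ (q ∈ ·)

theorem mem_evalFrom_intercalate_ofFn (s : List Γ) {m : ℕ} (w : Fin (m + 1) → List Γ)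
    (p q : σ) :
    q ∈ M.evalFrom {p} (s.intercalate (List.ofFn w)) ↔
      ∃ u v : Fin (m + 1) → σ, u 0 = p ∧ v (Fin.last m) = q ∧
        (∀ j : Fin m, u j.succ ∈ M.evalFrom {v j.castSucc} s) ∧
        ∀ j, v j ∈ M.evalFrom {u j} (w j) := by
  induction m generalizing p with
  | zero =>
    rw [List.ofFn_succ, List.ofFn_zero, List.intercalate_singleton]
    constructor
    · intro h
      exact ⟨fun _ => p, fun _ => q, rfl, rfl, Fin.elim0, Fin.forall_fin_one.2 h⟩
    · rintro ⟨u, v, rfl, rfl, -, hblock⟩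
      exact hblock 0
  | succ m ih =>
    rw [List.ofFn_succ, List.intercalate_cons_of_ne_nil (by simp), mem_evalFrom_append_iff]
    simp only [mem_evalFrom_append_iff, ih]
    constructor
    · rintro ⟨r, ⟨v₀, hv₀, hr⟩, u, v, rfl, rfl, hsep, hblock⟩
      refine ⟨Fin.cons p u, Fin.cons v₀ v, rfl, by rw [← Fin.succ_last, Fin.cons_succ], ?_, ?_⟩
      · rw [Fin.forall_fin_succ]
        simp only [← Fin.succ_castSucc, Fin.castSucc_zero, Fin.cons_succ, Fin.cons_zero]
        exact ⟨hr, hsep⟩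
      · rw [Fin.forall_fin_succ]
        simp only [Fin.cons_succ, Fin.cons_zero]
        exact ⟨hv₀, hblock⟩
    · rintro ⟨u, v, rfl, rfl, hsep, hblock⟩
      refine ⟨u 1, ⟨v 0, hblock 0, hsep 0⟩, fun j => u j.succ, fun j => v j.succ, rfl,
        congrArg v (Fin.succ_last m), fun j => ?_, fun j => hblock j.succ⟩
      simpa only [Fin.succ_castSucc] using hsep j.succ

/-- `uv.1 j` and `uv.2 j` are the states in which block `j` of a block word is entered and left. -/
def blockBoundaries (lt rt sh : Γ) (p q : σ) (m : ℕ) :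
    Set ((Fin (m + 1) → σ) × (Fin (m + 1) → σ)) :=
  {uv | uv.1 0 ∈ M.step p lt ∧ q ∈ M.step (uv.2 (Fin.last m)) rt ∧
    ∀ j : Fin m, uv.1 j.succ ∈ M.step (uv.2 j.castSucc) sh}

theorem mem_evalFrom_blockWord (a lt rt sh : Γ) {m : ℕ} (x : Fin (m + 1) → ℕ) (p q : σ) :
    q ∈ M.evalFrom {p} (blockWord a lt rt sh x) ↔
      ∃ uv ∈ M.blockBoundaries lt rt sh p q m,
        ∀ j, uv.2 j ∈ M.evalFrom {uv.1 j} (List.replicate (x j) a) := by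
  simp only [blockWord, mem_evalFrom_append_iff, mem_evalFrom_intercalate_ofFn,
    evalFrom_singleton, stepSet_singleton]
  constructor
  · rintro ⟨_, ⟨_, hlt, u, v, rfl, rfl, hsep, hblock⟩, hrt⟩
    exact ⟨(u, v), ⟨hlt, hrt, hsep⟩, hblock⟩
  · rintro ⟨⟨u, v⟩, ⟨hlt, hrt, hsep⟩, hblock⟩
    exact ⟨_, ⟨_, hlt, u, v, rfl, rfl, hsep, hblock⟩, hrt⟩

end NFA

theorem stmt12_general {Γ σ : Type*} [Fintype σ] (a lt rt sh : Γ)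
    (k : ℕ) (hk : 1 ≤ k) (M : NFA Γ σ) (q₁ q₂ : σ) :
    ∃ (t : ℕ) (f : Fin t → Fin k → Set ℕ),
      (∀ s : Fin t, ∀ j : Fin k, EventuallyPeriodic (f s j)) ∧
      {x : Fin k → ℕ | q₂ ∈ M.evalFrom {q₁} (blockWord a lt rt sh x)} =
        {x : Fin k → ℕ | ∃ s : Fin t, ∀ j : Fin k, x j ∈ f s j} := by
  obtain ⟨m, rfl⟩ : ∃ m, k = m + 1 := ⟨k - 1, by omega⟩
  have hunion : {x : Fin (m + 1) → ℕ | q₂ ∈ M.evalFrom {q₁} (blockWord a lt rt sh x)} =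
      {x | ∃ uv : M.blockBoundaries lt rt sh q₁ q₂ m,
        ∀ j, x j ∈ {i | uv.1.2 j ∈ M.evalFrom {uv.1.1 j} (List.replicate i a)}} := by
    ext x
    simp [NFA.mem_evalFrom_blockWord]
  rw [hunion]
  exact exists_fin_indexed_union_pi _ fun uv j =>
    M.eventuallyPeriodic_setOf_mem_evalFrom_replicate a _ _

theorem stmt12 {Γ σ : Type*} [Fintype σ] (a lt rt sh : Γ)
    (h₁ : a ≠ lt) (h₂ : a ≠ rt) (h₃ : a ≠ sh) (h₄ : lt ≠ rt) (h₅ : lt ≠ sh) (h₆ : rt ≠ sh)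
    (k : ℕ) (hk : 1 ≤ k) (M : NFA Γ σ) (q₁ q₂ : σ) :
    ∃ (t : ℕ) (f : Fin t → Fin k → Set ℕ),
      (∀ s : Fin t, ∀ j : Fin k, EventuallyPeriodic (f s j)) ∧
      {x : Fin k → ℕ | q₂ ∈ M.evalFrom {q₁} (blockWord a lt rt sh x)} =
        {x : Fin k → ℕ | ∃ s : Fin t, ∀ j : Fin k, x j ∈ f s j} :=
  stmt12_general a lt rt sh k hk M q₁ q₂
end
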